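/- arXiv:1201.4792 — 4 statements merged into one kernel-verified Lean document; each statement's English description precedes it below -/
import Mathlib

section
/- For any permutation π in the symmetric group S_p and the full cycle γ = (1 2 ... p) in S_p, the number of cycles satisfies |π| + |πγ⁻¹| ≤ p + 1, where |σ| denotes the number of cycles of σ. -/
/-- The number of cycles of a permutation, counting fixed points as cycles. -/
def cycleCount {p : ℕ} (σ : Equiv.Perm (Fin p)) : ℕ :=
  σ.cycleType.card + (Finset.univ.filter fun x => σ x = x).card

/-!
Multiplying a permutation by a transposition `swap a b` only merges or splits the orbits
through `a` and `b`, so it changes the number of orbits by at most one, and `swap x (σ x) * σ`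
has exactly one orbit more than `σ`, since it splits off the fixed point `x`. Induction on the
support of `σ` then gives `|σ| + |τ| ≤ p + |στ|`. Apply this to `σ = γπ⁻¹` and `τ = π`, using
`|γ| ≤ 1` and `|γπ⁻¹| = |πγ⁻¹|`.
-/

open Equiv Equiv.Perm Function

namespace Setoid

variable {α : Type*} (s : Setoid α) (a b : α)

open scoped Classical in
noncomputable def mergeClasses (x : α) : Quotient s :=
  if s b x then ⟦a⟧ else ⟦x⟧

noncomputable def merge : Setoid α := ker (s.mergeClasses a b)

variable {s a b} in
lemma merge_iff {x y : α} : s.merge a b x y ↔ s.mergeClasses a b x = s.mergeClasses a b y :=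
  Iff.rfl

lemma le_merge : s ≤ s.merge a b := by
  intro x y h
  have hxy : s b x ↔ s b y := ⟨fun h' => s.trans h' h, fun h' => s.trans h' (s.symm h)⟩
  by_cases hbx : s b x
  · simp [merge_iff, mergeClasses, hbx, hxy.1 hbx]
  · simp [merge_iff, mergeClasses, hbx, mt hxy.2 hbx, Quotient.sound h]

lemma merge_rel : s.merge a b a b := by
  simp [merge_iff, mergeClasses]

variable {s a b} in
lemma merge_le {t : Setoid α} (hst : s ≤ t) (hab : t a b) : s.merge a b ≤ t := by
  intro x y h
  simp only [merge_iff, mergeClasses] at h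
  split_ifs at h with hx hy hy
  · exact t.trans (t.symm (hst hx)) (hst hy)
  · exact t.trans (t.symm (hst hx)) (t.trans (t.symm hab) (hst (Quotient.exact h)))
  · exact t.trans (hst (Quotient.exact h)) (t.trans hab (hst hy))
  · exact hst (Quotient.exact h)

lemma compl_singleton_subset_range_mergeClasses :
    {⟦b⟧}ᶜ ⊆ Set.range (s.mergeClasses a b) := by
  intro c hc
  induction c using Quotient.inductionOn with | h x => ?_
  have hbx : ¬ s b x := fun h => hc (Quotient.sound (s.symm h))
  exact ⟨x, by simp [mergeClasses, hbx]⟩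

variable {s a b} in
lemma range_mergeClasses_subset_compl_singleton (hab : ¬ s a b) :
    Set.range (s.mergeClasses a b) ⊆ {⟦b⟧}ᶜ := by
  rintro _ ⟨x, rfl⟩ h
  by_cases hbx : s b x
  · simp only [mergeClasses, if_pos hbx] at h
    exact hab (Quotient.exact h)
  · simp only [mergeClasses, if_neg hbx] at h
    exact hbx (s.symm (Quotient.exact h))

lemma card_quotient_merge_eq_ncard_range :
    Nat.card (Quotient (s.merge a b)) = (Set.range (s.mergeClasses a b)).ncard :=
  Nat.card_congr (quotientKerEquivRange _)

variable [Finite α]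

lemma card_quotient_le_of_le {s t : Setoid α} (h : s ≤ t) :
    Nat.card (Quotient t) ≤ Nat.card (Quotient s) :=
  Nat.card_le_card_of_surjective (map_of_le h) (by rintro ⟨x⟩; exact ⟨⟦x⟧, rfl⟩)

lemma card_quotient_le_card_quotient_merge_add_one :
    Nat.card (Quotient s) ≤ Nat.card (Quotient (s.merge a b)) + 1 := by
  have := Set.ncard_le_ncard (s.compl_singleton_subset_range_mergeClasses a b)
  rw [Set.ncard_compl, Set.ncard_singleton, ← card_quotient_merge_eq_ncard_range] at this
  omega

variable {s a b} in
lemma card_quotient_merge_add_one (hab : ¬ s a b) :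
    Nat.card (Quotient (s.merge a b)) + 1 = Nat.card (Quotient s) := by
  have := Set.ncard_le_ncard (range_mergeClasses_subset_compl_singleton hab)
  rw [Set.ncard_compl, Set.ncard_singleton, ← card_quotient_merge_eq_ncard_range] at this
  have : Nonempty (Quotient s) := ⟨⟦a⟧⟩
  have : 0 < Nat.card (Quotient s) := Nat.card_pos
  have := s.card_quotient_le_card_quotient_merge_add_one a b
  omega

end Setoid

namespace Equiv.Perm

variable {α : Type*}

noncomputable def orbitCount (σ : Perm α) : ℕ := Nat.card (Quotient (SameCycle.setoid σ))

lemma orbitCount_inv (σ : Perm α) : orbitCount σ⁻¹ = orbitCount σ := by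
  have : SameCycle.setoid σ⁻¹ = SameCycle.setoid σ := Setoid.ext fun _ _ => sameCycle_inv
  rw [orbitCount, orbitCount, this]

lemma orbitCount_one : orbitCount (1 : Perm α) = Nat.card α :=
  (Nat.card_eq_of_bijective _ ⟨fun _ _ h => sameCycle_one.1 (Quotient.exact h),
    Quotient.mk_surjective⟩).symm

section Finite

variable [Finite α]

lemma orbitCount_le_one_of_forall_sameCycle {σ : Perm α} (h : ∀ x y, σ.SameCycle x y) :
    orbitCount σ ≤ 1 :=
  Finite.card_le_one_iff_subsingleton.2
    ⟨fun c d => Quotient.inductionOn₂ c d fun x y => Quotient.sound (h x y)⟩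

lemma sameCycle_setoid_le_of_forall_rel {σ : Perm α} {t : Setoid α}
    (h : ∀ x, t x (σ x)) : SameCycle.setoid σ ≤ t := by
  intro x y hxy
  obtain ⟨n, rfl⟩ := hxy.exists_nat_pow_eq
  clear hxy
  induction n with
  | zero => exact t.refl x
  | succ n ih => rw [pow_succ', mul_apply]; exact t.trans ih (h _)

variable [DecidableEq α]

lemma sameCycle_setoid_swap_mul_le {σ : Perm α} {t : Setoid α}
    (hσ : SameCycle.setoid σ ≤ t) {a b : α} (hab : t a b) :
    SameCycle.setoid (swap a b * σ) ≤ t := by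
  refine sameCycle_setoid_le_of_forall_rel fun x =>
    t.trans (hσ (sameCycle_apply_right.2 (.refl σ x))) ?_
  rw [mul_apply, swap_apply_def]
  split_ifs with h₁ h₂
  · exact h₁ ▸ hab
  · exact h₂ ▸ t.symm hab
  · exact t.refl _

lemma orbitCount_swap_mul_le_add_one (σ : Perm α) (a b : α) :
    orbitCount (swap a b * σ) ≤ orbitCount σ + 1 := by
  have h := sameCycle_setoid_swap_mul_le
    (Setoid.le_merge (SameCycle.setoid (swap a b * σ)) a b) (Setoid.merge_rel _ a b)
  rw [swap_mul_self_mul] at h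
  exact (Setoid.card_quotient_le_card_quotient_merge_add_one _ a b).trans
    (Nat.add_le_add_right (Setoid.card_quotient_le_of_le h) 1)

lemma orbitCount_swap_mul_of_apply_ne {σ : Perm α} {x : α} (hx : σ x ≠ x) :
    orbitCount (swap x (σ x) * σ) = orbitCount σ + 1 := by
  set τ := swap x (σ x) * σ
  have hσx : σ.SameCycle x (σ x) := sameCycle_apply_right.2 (.refl σ x)
  have hτσ : SameCycle.setoid τ ≤ SameCycle.setoid σ := sameCycle_setoid_swap_mul_le le_rfl hσx
  have hτx : ¬ τ.SameCycle x (σ x) := fun h =>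
    hx (h.eq_of_left (show τ x = x by simp [τ])).symm
  refine le_antisymm (orbitCount_swap_mul_le_add_one σ x (σ x)) ?_
  calc orbitCount σ + 1 ≤ Nat.card (Quotient ((SameCycle.setoid τ).merge x (σ x))) + 1 :=
        Nat.add_le_add_right (Setoid.card_quotient_le_of_le (Setoid.merge_le hτσ hσx)) 1
    _ = orbitCount τ := Setoid.card_quotient_merge_add_one (s := SameCycle.setoid τ) hτx

end Finite

section Fintype

variable [Fintype α] [DecidableEq α]

def cycleFactorOrFixedPoint (σ : Perm α) (x : α) : σ.cycleFactorsFinset ⊕ {x // σ x = x} :=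
  if h : σ x = x then .inr ⟨x, h⟩
  else .inl ⟨σ.cycleOf x, cycleOf_mem_cycleFactorsFinset_iff.2 (mem_support.2 h)⟩

lemma cycleFactorOrFixedPoint_eq_iff (σ : Perm α) {x y : α} :
    σ.cycleFactorOrFixedPoint x = σ.cycleFactorOrFixedPoint y ↔ σ.SameCycle x y := by
  by_cases hx : σ x = x <;> by_cases hy : σ y = y
  · simp only [cycleFactorOrFixedPoint, hx, hy, dite_true, Sum.inr.injEq, Subtype.mk.injEq]
    exact ⟨fun h => h ▸ .refl σ x, fun h => h.eq_of_left hx⟩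
  · simp only [cycleFactorOrFixedPoint, hx, hy, dite_true, dite_false, reduceCtorEq, false_iff]
    exact fun h => hy (h.apply_eq_self_iff.1 hx)
  · simp only [cycleFactorOrFixedPoint, hx, hy, dite_true, dite_false, reduceCtorEq, false_iff]
    exact fun h => hx (h.apply_eq_self_iff.2 hy)
  · simp only [cycleFactorOrFixedPoint, hx, hy, dite_false, Sum.inl.injEq, Subtype.mk.injEq]
    exact (sameCycle_iff_cycleOf_eq_of_mem_support (mem_support.2 hx) (mem_support.2 hy)).symm

lemma cycleFactorOrFixedPoint_surjective (σ : Perm α) :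
    Surjective σ.cycleFactorOrFixedPoint := by
  rintro (⟨c, hc⟩ | ⟨x, hx⟩)
  · obtain ⟨x, hx⟩ := (mem_cycleFactorsFinset_iff.1 hc).1.nonempty_support
    have hσx : σ x ≠ x := mem_support.1 (mem_cycleFactorsFinset_support_le hc hx)
    exact ⟨x, by simp [cycleFactorOrFixedPoint, hσx, cycle_is_cycleOf hx hc]⟩
  · exact ⟨x, by simp [cycleFactorOrFixedPoint, hx]⟩

lemma orbitCount_eq_card_cycleType_add_card_fixedPoints (σ : Perm α) :
    orbitCount σ = σ.cycleType.card + (Finset.univ.filter fun x => σ x = x).card := by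
  have : SameCycle.setoid σ = Setoid.ker σ.cycleFactorOrFixedPoint :=
    Setoid.ext fun _ _ => (σ.cycleFactorOrFixedPoint_eq_iff).symm
  rw [orbitCount, this, Nat.card_congr (Setoid.quotientKerEquivOfSurjective _
    σ.cycleFactorOrFixedPoint_surjective), Nat.card_sum, Nat.card_eq_fintype_card,
    Nat.card_eq_fintype_card, Fintype.card_coe, Fintype.card_subtype, cycleType_def,
    Multiset.card_map]
  rfl

theorem orbitCount_add_orbitCount_le (σ τ : Perm α) :
    orbitCount σ + orbitCount τ ≤ Fintype.card α + orbitCount (σ * τ) := by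
  induction h : σ.support.card using Nat.strong_induction_on generalizing σ with
  | _ n ih =>
  obtain rfl | ⟨x, hx⟩ : σ = 1 ∨ ∃ x, σ x ≠ x := by
    by_contra! h; exact h.1 (Equiv.ext h.2)
  · simp [orbitCount_one, Nat.card_eq_fintype_card]
  have hσ' := ih _ (h ▸ card_support_swap_mul hx) (swap x (σ x) * σ) rfl
  have hστ : orbitCount (swap x (σ x) * σ * τ) ≤ orbitCount (σ * τ) + 1 := by
    rw [mul_assoc]; exact orbitCount_swap_mul_le_add_one _ _ _
  rw [orbitCount_swap_mul_of_apply_ne hx] at hσ'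
  omega

end Fintype

lemma sameCycle_finRotate (p : ℕ) (x y : Fin p) : (finRotate p).SameCycle x y := by
  rcases lt_or_ge p 2 with hp | hp
  · have : Subsingleton (Fin p) := Fin.subsingleton_iff_le_one.2 (by omega)
    exact Subsingleton.elim x y ▸ .refl _ x
  · have h := support_finRotate_of_le hp
    exact (isCycle_finRotate_of_le hp).sameCycle (mem_support.1 (h ▸ Finset.mem_univ x))
      (mem_support.1 (h ▸ Finset.mem_univ y))

end Equiv.Perm

/-- For any `π ∈ S_p` and the full cycle `γ`, `|π| + |πγ⁻¹| ≤ p + 1`. -/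
theorem cycleCount_add_cycleCount_mul_inv_finRotate_le (p : ℕ) (π : Equiv.Perm (Fin p)) :
    cycleCount π + cycleCount (π * (finRotate p)⁻¹) ≤ p + 1 := by
  have hcount (σ : Equiv.Perm (Fin p)) : cycleCount σ = orbitCount σ :=
    (orbitCount_eq_card_cycleType_add_card_fixedPoints σ).symm
  have hγ : orbitCount (finRotate p) ≤ 1 :=
    orbitCount_le_one_of_forall_sameCycle (sameCycle_finRotate p)
  have key := orbitCount_add_orbitCount_le (π * (finRotate p)⁻¹)⁻¹ π
  rw [orbitCount_inv, mul_inv_rev, inv_inv, inv_mul_cancel_right, Fintype.card_fin] at key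
  rw [hcount, hcount]
  omega
end

section
/- Let Λ ∈ M_n(ℂ) ⊗ M_n(ℂ) correspond to the linear map φ(A) = Tr(BA)C for fixed B, C ∈ M_n(ℂ), i.e. Λ_{ab,cd} = B_{ca}C_{bd}. Then for any permutations π, σ ∈ S_p, the generalized mixed trace factorizes: Tr_{(π,σ)}(Λ) := Σ Π_s Λ_{e_s a_s, e_{π(s)} a_{σ(s)}} = Tr_π(B) · Tr_σ(C), where Tr_ρ(A) = Π_{cycles c of ρ} Tr(A^{#c}). -/
/-! `Λ` is the Kronecker product `Bᵀ ⊗ₖ C`, so the sum over `e` and the sum over `a` separate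
into `Tr_π(Bᵀ) · Tr_σ(C)`. Transposing amounts to inverting `π`, which is harmless since
`π⁻¹` is conjugate to `π`. -/

/-- The generalized trace `Tr_ρ(A) = Σ_e Π_s A_{e_s e_{ρ(s)}}`, equal to the product over
the cycles `c` of `ρ` of `Tr(A^{#c})`. -/
noncomputable def permTr {n p : ℕ} (A : Matrix (Fin n) (Fin n) ℂ) (ρ : Equiv.Perm (Fin p)) : ℂ :=
  ∑ e : Fin p → Fin n, ∏ s, A (e s) (e (ρ s))

/-- The generalized mixed trace
`Tr_{(π,σ)}(Λ) = Σ_{a,e} Π_s Λ_{e_s a_s, e_{π(s)} a_{σ(s)}}` of a matrix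
`Λ ∈ M_N(ℂ) ⊗ M_N(ℂ)` with entries `Λ_{ab,cd} = Λ (a,b) (c,d)`. -/
noncomputable def mixedTr {N : Type*} [Fintype N] {p : ℕ} (Λ : Matrix (N × N) (N × N) ℂ)
    (π σ : Equiv.Perm (Fin p)) : ℂ :=
  ∑ e : Fin p → N, ∑ a : Fin p → N, ∏ s, Λ (e s, a s) (e (π s), a (σ s))
open Matrix
open scoped Kronecker

lemma permTr_conj {n p : ℕ} (A : Matrix (Fin n) (Fin n) ℂ) (π τ : Equiv.Perm (Fin p)) :
    permTr A (τ * π * τ⁻¹) = permTr A π := by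
  unfold permTr
  refine Fintype.sum_equiv (Equiv.arrowCongr τ.symm (Equiv.refl (Fin n))) _ _ fun e => ?_
  calc ∏ s, A (e s) (e ((τ * π * τ⁻¹) s))
      = ∏ s, A (e (τ s)) (e ((τ * π * τ⁻¹) (τ s))) := (Equiv.prod_comp τ _).symm
    _ = _ := by simp [Equiv.arrowCongr]

lemma permTr_inv {n p : ℕ} (A : Matrix (Fin n) (Fin n) ℂ) (π : Equiv.Perm (Fin p)) :
    permTr A π⁻¹ = permTr A π := by
  obtain ⟨τ, hτ⟩ := isConj_iff.mp
    (Equiv.Perm.isConj_of_cycleType_eq (Equiv.Perm.cycleType_inv π).symm)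
  rw [← hτ, permTr_conj]

lemma permTr_transpose {n p : ℕ} (A : Matrix (Fin n) (Fin n) ℂ) (π : Equiv.Perm (Fin p)) :
    permTr Aᵀ π = permTr A π := by
  rw [← permTr_inv A π]
  refine Finset.sum_congr rfl fun e _ => ?_
  calc ∏ s, Aᵀ (e s) (e (π s))
      = ∏ s, A (e (π (π⁻¹ s))) (e (π⁻¹ s)) := (Equiv.prod_comp π⁻¹ _).symm
    _ = ∏ s, A (e s) (e (π⁻¹ s)) := by simp

lemma mixedTr_kronecker {n p : ℕ} (A C : Matrix (Fin n) (Fin n) ℂ)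
    (π σ : Equiv.Perm (Fin p)) :
    mixedTr (A ⊗ₖ C) π σ = permTr A π * permTr C σ := by
  simp only [mixedTr, permTr, Finset.sum_mul_sum, kroneckerMap_apply, Finset.prod_mul_distrib]

/-- For `Λ` with `Λ_{ab,cd} = B_{ca} C_{bd}` (i.e. `φ(A) = Tr(BA)C`), the mixed trace
factorizes: `Tr_{(π,σ)}(Λ) = Tr_π(B) · Tr_σ(C)`. -/
theorem mixedTr_traceOut (n p : ℕ) (B C : Matrix (Fin n) (Fin n) ℂ)
    (π σ : Equiv.Perm (Fin p)) :
    mixedTr (fun x y => B y.1 x.1 * C x.2 y.2) π σ = permTr B π * permTr C σ := by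
  rw [← permTr_transpose B]
  exact mixedTr_kronecker Bᵀ C π σ
end

section
/- Let Λ ∈ M_n(ℂ) ⊗ M_n(ℂ) correspond to φ(A) = B Aᵗ C, i.e. Λ_{ab,cd} = B_{bc}C_{ad}. Then for any π, σ ∈ S_p, Tr_{(π,σ)}(Λ) = Tr_{σπ}(BC). -/
/-! Expanding the entries of `BC` gives
`Tr_{σπ}(BC) = Σ_{f,g} Π_s B_{f_s g_s} C_{g_s f_{σπ(s)}}`. In `Tr_{(π,σ)}(Λ)` the summand is
`Π_s B_{a_s e_{π(s)}} · Π_s C_{e_s a_{σ(s)}}`; reindexing the second product by `s ↦ π(s)` shows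
that it is the summand above at `f = a`, `g = e ∘ π`, and `e ↦ e ∘ π` is a bijection. -/

open Finset

theorem permTr_mul {n p : ℕ} (A B : Matrix (Fin n) (Fin n) ℂ) (ρ : Equiv.Perm (Fin p)) :
    permTr (A * B) ρ =
      ∑ f : Fin p → Fin n, ∑ g : Fin p → Fin n, ∏ s, A (f s) (g s) * B (g s) (f (ρ s)) := by
  refine sum_congr rfl fun f _ => ?_
  simp only [Matrix.mul_apply]
  exact Fintype.prod_sum fun s g => A (f s) g * B g (f (ρ s))

theorem prod_mul_comp_perm {ι κ M : Type*} [Fintype ι] [CommMonoid M] (B C : κ → κ → M)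
    (π σ : Equiv.Perm ι) (a e : ι → κ) :
    ∏ s, B (a s) (e (π s)) * C (e s) (a (σ s)) =
      ∏ s, B (a s) ((e ∘ π) s) * C ((e ∘ π) s) (a ((σ * π) s)) := by
  simp only [prod_mul_distrib, Function.comp_apply, Equiv.Perm.mul_apply]
  rw [Equiv.prod_comp π fun s => C (e s) (a (σ s))]

/-- For `Λ` with `Λ_{ab,cd} = B_{bc} C_{ad}` (i.e. `φ(A) = B Aᵗ C`),
`Tr_{(π,σ)}(Λ) = Tr_{σπ}(BC)`. -/
theorem mixedTr_transpose (n p : ℕ) (B C : Matrix (Fin n) (Fin n) ℂ)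
    (π σ : Equiv.Perm (Fin p)) :
    mixedTr (fun x y => B x.2 y.1 * C x.1 y.2) π σ = permTr (B * C) (σ * π) := by
  let precompπ : (Fin p → Fin n) ≃ (Fin p → Fin n) := Equiv.arrowCongr π.symm (Equiv.refl _)
  calc mixedTr (fun x y => B x.2 y.1 * C x.1 y.2) π σ
      = ∑ a : Fin p → Fin n, ∑ e : Fin p → Fin n,
          ∏ s, B (a s) (e (π s)) * C (e s) (a (σ s)) := sum_comm
    _ = ∑ a : Fin p → Fin n, ∑ e : Fin p → Fin n,
          ∏ s, B (a s) (precompπ e s) * C (precompπ e s) (a ((σ * π) s)) := by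
        simp only [prod_mul_comp_perm B C π σ]
        rfl
    _ = ∑ a : Fin p → Fin n, ∑ g : Fin p → Fin n,
          ∏ s, B (a s) (g s) * C (g s) (a ((σ * π) s)) :=
        sum_congr rfl fun a _ =>
          Equiv.sum_comp precompπ fun g => ∏ s, B (a s) (g s) * C (g s) (a ((σ * π) s))
    _ = permTr (B * C) (σ * π) := (permTr_mul B C (σ * π)).symm
end

section
/- Let D = BC for B, C ∈ M_n(ℂ) and let Λ_{ab,cd} = B_{ba}C_{cd} (corresponding to φ(A) = BAC). Then for every p ∈ ℕ and every noncrossing partition π ∈ NC(p) (viewed as a permutation), the multiplicativity identity tr_{(1,1)}(Λ) · tr_{(π,γ)}(Λ) = tr_{(1,πγ⁻¹)}(Λ) · tr_{(π,π)}(Λ) holds, where γ is the full cycle and tr_{(π,σ)}(Λ) = n^{−|π|−|σ|} Tr_{(π,σ)}(Λ). -/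
/-- A permutation comes from a noncrossing partition of `{1,…,p}` (by cycling increasingly
inside each block) iff `|π| + |πγ⁻¹| = p + 1` (Biane's characterization). -/
def IsNCPerm {p : ℕ} (π : Equiv.Perm (Fin p)) : Prop :=
  cycleCount π + cycleCount (π * (finRotate p)⁻¹) = p + 1

/-- The normalized mixed trace `tr_{(π,σ)}(Λ) = n^{−|π|−|σ|} Tr_{(π,σ)}(Λ)`. -/
noncomputable def nmixedTr {n p : ℕ} (Λ : Matrix ((Fin n × Fin n)) ((Fin n × Fin n)) ℂ)
    (π σ : Equiv.Perm (Fin p)) : ℂ :=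
  (n : ℂ) ^ (-((cycleCount π : ℤ) + (cycleCount σ : ℤ))) * mixedTr Λ π σ


noncomputable def trF {N : Type*} [Fintype N] {p : ℕ} (D : Matrix N N ℂ)
    (τ : Equiv.Perm (Fin p)) : ℂ :=
  ∑ a : Fin p → N, ∏ s, D (a s) (a (τ s))

lemma trF_conj {N : Type*} [Fintype N] {p : ℕ} (D : Matrix N N ℂ)
    (ρ τ : Equiv.Perm (Fin p)) : trF D (ρ * τ * ρ⁻¹) = trF D τ := by
  unfold trF
  refine Fintype.sum_equiv (Equiv.arrowCongr ρ.symm (Equiv.refl N)) _ _ ?_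
  intro a
  refine Fintype.prod_equiv ρ⁻¹ _ _ ?_
  intro s
  simp [Equiv.arrowCongr]

lemma sum_prod_eval {n p : ℕ} (f : Fin p → Fin n → ℂ) :
    ∑ e : Fin p → Fin n, ∏ s, f s (e s) = ∏ s, ∑ x, f s x := by
  rw [Finset.prod_univ_sum]
  exact (Finset.sum_congr (by simp [Fintype.piFinset_univ]) fun e _ => rfl).symm

lemma mixedTr_factor {n p : ℕ} (B C : Matrix (Fin n) (Fin n) ℂ) (π σ : Equiv.Perm (Fin p)) :
    mixedTr (fun x y => B x.2 x.1 * C y.1 y.2) π σ = trF (B * C) (σ * π⁻¹) := by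
  unfold mixedTr trF
  rw [Finset.sum_comm]
  refine Finset.sum_congr rfl fun a _ => ?_
  have h1 : ∀ e : Fin p → Fin n, (∏ s, B (a s) (e s) * C (e (π s)) (a (σ s)))
      = ∏ s, (B (a s) (e s) * C (e s) (a (σ (π⁻¹ s)))) := by
    intro e
    rw [Finset.prod_mul_distrib, Finset.prod_mul_distrib]
    congr 1
    refine Fintype.prod_equiv π (fun s => C (e (π s)) (a (σ s))) _ ?_
    intro s
    simp
  simp only [h1]
  rw [sum_prod_eval (fun s x => B (a s) x * C x (a (σ (π⁻¹ s))))]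
  refine Finset.prod_congr rfl fun s _ => ?_
  rw [Matrix.mul_apply]
  rfl

lemma cycleCount_one {p : ℕ} : cycleCount (1 : Equiv.Perm (Fin p)) = p := by
  simp [cycleCount, Equiv.Perm.cycleType_one]

lemma cycleCount_finRotate {p : ℕ} (hp : 0 < p) : cycleCount (finRotate p) = 1 := by
  match p, hp with
  | 1, _ =>
    have : finRotate 1 = 1 := Subsingleton.elim _ _
    rw [this, cycleCount_one]
  | (m+2), _ =>
    unfold cycleCount
    rw [cycleType_finRotate]
    have h2 : (Finset.univ.filter fun x => finRotate (m+2) x = x) = ∅ := by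
      ext x
      simp only [Finset.mem_filter, Finset.mem_univ, true_and, Finset.notMem_empty, iff_false]
      have := support_finRotate (n := m)
      have hx : x ∈ (finRotate (m+2)).support := by rw [this]; exact Finset.mem_univ x
      exact (Equiv.Perm.mem_support.mp hx)
    rw [h2]
    simp

/-- For `Λ_{ab,cd} = B_{ba} C_{cd}` (i.e. `φ(A) = BAC`) and any `π ∈ NC(p)`, the
multiplicativity identity
`tr_{(1,1)}(Λ) tr_{(π,γ)}(Λ) = tr_{(1,πγ⁻¹)}(Λ) tr_{(π,π)}(Λ)` holds. -/
theorem sandwich_multiplicative (n p : ℕ) (hn : 0 < n)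
    (B C : Matrix (Fin n) (Fin n) ℂ) (π : Equiv.Perm (Fin p)) (hπ : IsNCPerm π) :
    nmixedTr (fun x y => B x.2 x.1 * C y.1 y.2) (1 : Equiv.Perm (Fin p)) 1 *
        nmixedTr (fun x y => B x.2 x.1 * C y.1 y.2) π (finRotate p) =
      nmixedTr (fun x y => B x.2 x.1 * C y.1 y.2) (1 : Equiv.Perm (Fin p)) (π * (finRotate p)⁻¹) *
        nmixedTr (fun x y => B x.2 x.1 * C y.1 y.2) π π := by
  rcases Nat.eq_zero_or_pos p with hp | hp
  · exfalso
    subst hp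
    have h1 : π = 1 := Subsingleton.elim _ _
    rw [IsNCPerm, h1] at hπ
    have h2 : (1 * (finRotate 0)⁻¹ : Equiv.Perm (Fin 0)) = 1 := Subsingleton.elim _ _
    rw [h2, cycleCount_one] at hπ
    simp at hπ
  · have hne : (n : ℂ) ≠ 0 := Nat.cast_ne_zero.mpr hn.ne'
    have key : trF (B * C) (finRotate p * π⁻¹) = trF (B * C) (π * (finRotate p)⁻¹) := by
      have hc : IsConj (finRotate p * π⁻¹) (π * (finRotate p)⁻¹) := by
        rw [Equiv.Perm.isConj_iff_cycleType_eq]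
        have h : (π * (finRotate p)⁻¹) = (finRotate p * π⁻¹)⁻¹ := by group
        rw [h, Equiv.Perm.cycleType_inv]
      obtain ⟨c, hc⟩ := isConj_iff.mp hc
      rw [← hc, trF_conj]
    unfold nmixedTr
    simp only [mixedTr_factor]
    rw [inv_one, mul_one, mul_inv_cancel, key]
    have main : ∀ (a b c d : ℤ) (X Y : ℂ), a + b = c + d →
        (n:ℂ)^a * X * ((n:ℂ)^b * Y) = (n:ℂ)^c * Y * ((n:ℂ)^d * X) := by
      intro a b c d X Y h
      have hab : (n:ℂ)^a * (n:ℂ)^b = (n:ℂ)^c * (n:ℂ)^d := by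
        rw [← zpow_add₀ hne, ← zpow_add₀ hne, h]
      calc (n:ℂ)^a * X * ((n:ℂ)^b * Y) = ((n:ℂ)^a * (n:ℂ)^b) * (X * Y) := by ring
        _ = ((n:ℂ)^c * (n:ℂ)^d) * (X * Y) := by rw [hab]
        _ = (n:ℂ)^c * Y * ((n:ℂ)^d * X) := by ring
    refine main _ _ _ _ _ _ ?_
    have h1 := cycleCount_one (p := p)
    have h2 := cycleCount_finRotate hp
    have h3 : cycleCount π + cycleCount (π * (finRotate p)⁻¹) = p + 1 := hπ
    rw [h1, h2]
    push_cast
    omega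
end
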